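/- (Theorem 1, equivalence.) Let the target path p : ℝ → ℝ² have unit tangent e'_1(s) = (cos θ_r(s), sin θ_r(s)) with θ_r continuously differentiable and κ_r = θ_r' locally Lipschitz, and unit normal e'_2(s) = (−sin θ_r(s), cos θ_r(s)). Let q : [t₀,t₁] → ℝ² satisfy q̇ = v(cos θ_o, sin θ_o) with θ̇_o = κ v for continuous v, κ and differentiable θ_o, and fix s_{r0} ∈ ℝ. Then the following are equivalent: (I) there exists a differentiable s_r : [t₀,t₁] → ℝ with s_r(t₀) = s_{r0} such that for all t, (q(t) − p(s_r(t))) · e'_1(s_r(t)) = 0 and 1 − κ_r(s_r(t)) · ((q(t) − p(s_r(t))) · e'_2(s_r(t))) > 0; (II) (q(t₀) − p(s_{r0})) · e'_1(s_{r0}) = 0, 1 − κ_r(s_{r0}) · ((q(t₀) − p(s_{r0})) · e'_2(s_{r0})) > 0, and the system ṡ_r = v cos θ / (1 − κ_r(s_r) z), ż = v sin θ, θ̇ = κ v − κ_r(s_r) v cos θ / (1 − κ_r(s_r) z), with initial conditions s_r(t₀) = s_{r0}, z(t₀) = (q(t₀) − p(s_{r0})) · e'_2(s_{r0}), θ(t₀)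 = θ_o(t₀) − θ_r(s_{r0}), admits a differentiable solution (θ, s_r, z) on [t₀,t₁] along which 1 − κ_r(s_r(t)) z(t) > 0 for all t. -/

import Mathlib

/-!
If `sr` is a reference point, differentiating the orthogonality condition gives
`ṡr (1 - κr(sr) z) = v cos θ` for `θ = θo - θr ∘ sr` and the lateral offset `z`, and the
error-state equation follows. Conversely, along a solution of the error-state equation `θ`
coincides with `θo - θr ∘ sr`, since both solve the same equation from the same initial value.
The frame coordinates `(q - p ∘ sr) · e1 ∘ sr` and `(q - p ∘ sr) · e2 ∘ sr - z` then rotate with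
angular speed `κr(sr) ṡr`, so the sum of their squares is constant, hence zero.
-/

def dot (a b : ℝ × ℝ) : ℝ := a.1 * b.1 + a.2 * b.2

open Set

theorem hasDerivWithinAt_of_uniqueDiffWithinAt_imp {𝕜 F : Type*}
    [NontriviallyNormedField 𝕜] [NormedAddCommGroup F] [NormedSpace 𝕜 F] {f : 𝕜 → F} {f' : F}
    {s : Set 𝕜} {x : 𝕜}
    (h : UniqueDiffWithinAt 𝕜 s x → HasDerivWithinAt f f' s x) : HasDerivWithinAt f f' s x := by
  by_cases hu : UniqueDiffWithinAt 𝕜 s x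
  · exact h hu
  · exact HasFDerivWithinAt.of_not_accPt (uniqueDiffWithinAt_iff_accPt.not.mp hu)

theorem Convex.eqOn_of_hasDerivWithinAt_eq {E : Type*} [NormedAddCommGroup E] [NormedSpace ℝ E]
    {f g f' : ℝ → E} {s : Set ℝ} (hs : Convex ℝ s) (hf : ∀ x ∈ s, HasDerivWithinAt f (f' x) s x)
    (hg : ∀ x ∈ s, HasDerivWithinAt g (f' x) s x) {a : ℝ} (ha : a ∈ s) (hfg : f a = g a) :
    EqOn f g s := by
  intro b hb
  have hderiv (x : ℝ) (hx : x ∈ s) : HasDerivWithinAt (f - g) 0 s x := by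
    simpa using (hf x hx).sub (hg x hx)
  have := hs.norm_image_sub_le_of_norm_hasDerivWithin_le (C := 0) hderiv (by simp) ha hb
  simpa [hfg, sub_eq_zero] using this

theorem HasDerivWithinAt.dot {a b : ℝ → ℝ × ℝ} {a' b' : ℝ × ℝ} {s : Set ℝ} {x : ℝ}
    (ha : HasDerivWithinAt a a' s x) (hb : HasDerivWithinAt b b' s x) :
    HasDerivWithinAt (fun t => dot (a t) (b t)) (dot a' (b x) + dot (a x) b') s x := by
  have hfst {c : ℝ → ℝ × ℝ} {c' : ℝ × ℝ} (h : HasDerivWithinAt c c' s x) :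
      HasDerivWithinAt (fun t => (c t).1) c'.1 s x :=
    (ContinuousLinearMap.fst ℝ ℝ ℝ).hasFDerivAt.comp_hasDerivWithinAt x h
  have hsnd {c : ℝ → ℝ × ℝ} {c' : ℝ × ℝ} (h : HasDerivWithinAt c c' s x) :
      HasDerivWithinAt (fun t => (c t).2) c'.2 s x :=
    (ContinuousLinearMap.snd ℝ ℝ ℝ).hasFDerivAt.comp_hasDerivWithinAt x h
  have := ((hfst ha).mul (hfst hb)).add ((hsnd ha).mul (hsnd hb))
  exact this.congr_deriv (by simp only [_root_.dot]; ring)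

structure IsFrenetFrame (θr κr : ℝ → ℝ) (e1 e2 p : ℝ → ℝ × ℝ) : Prop where
  hasDerivAt_angle : ∀ s, HasDerivAt θr (κr s) s
  tangent_eq : ∀ s, e1 s = (Real.cos (θr s), Real.sin (θr s))
  normal_eq : ∀ s, e2 s = (-Real.sin (θr s), Real.cos (θr s))
  hasDerivAt_path : ∀ s, HasDerivAt p (e1 s) s

namespace IsFrenetFrame

variable {θr κr : ℝ → ℝ} {e1 e2 p : ℝ → ℝ × ℝ}

theorem hasDerivAt_tangent (hP : IsFrenetFrame θr κr e1 e2 p) (s : ℝ) :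
    HasDerivAt e1 (κr s • e2 s) s := by
  have hθ := hP.hasDerivAt_angle s
  rw [funext hP.tangent_eq]
  refine (((Real.hasDerivAt_cos _).comp s hθ).prodMk
    ((Real.hasDerivAt_sin _).comp s hθ)).congr_deriv ?_
  simp only [hP.normal_eq, Prod.smul_mk, smul_eq_mul, Prod.mk.injEq]
  constructor <;> ring

theorem hasDerivAt_normal (hP : IsFrenetFrame θr κr e1 e2 p) (s : ℝ) :
    HasDerivAt e2 (-κr s • e1 s) s := by
  have hθ := hP.hasDerivAt_angle s
  rw [funext hP.normal_eq]
  refine (((Real.hasDerivAt_sin _).comp s hθ).neg.prodMk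
    ((Real.hasDerivAt_cos _).comp s hθ)).congr_deriv ?_
  simp only [hP.tangent_eq, Prod.smul_mk, smul_eq_mul, Prod.mk.injEq]
  constructor <;> ring

theorem dot_velocity_tangent (hP : IsFrenetFrame θr κr e1 e2 p) (v a s : ℝ) :
    dot (v • (Real.cos a, Real.sin a)) (e1 s) = v * Real.cos (a - θr s) := by
  simp only [dot, hP.tangent_eq, Prod.smul_mk, smul_eq_mul, Real.cos_sub]
  ring

theorem dot_velocity_normal (hP : IsFrenetFrame θr κr e1 e2 p) (v a s : ℝ) :
    dot (v • (Real.cos a, Real.sin a)) (e2 s) = v * Real.sin (a - θr s) := by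
  simp only [dot, hP.normal_eq, Prod.smul_mk, smul_eq_mul, Real.sin_sub]
  ring

variable {s : Set ℝ} {x : ℝ} {q : ℝ → ℝ × ℝ} {q' : ℝ × ℝ} {sr : ℝ → ℝ} {sr' : ℝ}

theorem hasDerivWithinAt_dot_tangent (hP : IsFrenetFrame θr κr e1 e2 p)
    (hq : HasDerivWithinAt q q' s x) (hsr : HasDerivWithinAt sr sr' s x) :
    HasDerivWithinAt (fun u => dot (q u - p (sr u)) (e1 (sr u)))
      (dot q' (e1 (sr x)) - sr' * (1 - κr (sr x) * dot (q x - p (sr x)) (e2 (sr x)))) s x := by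
  have hE := (hP.hasDerivAt_tangent (sr x)).scomp_hasDerivWithinAt x hsr
  have hD := (hP.hasDerivAt_path (sr x)).scomp_hasDerivWithinAt x hsr
  refine ((hq.sub hD).dot hE).congr_deriv ?_
  simp only [dot, Function.comp_apply, Pi.sub_apply, hP.tangent_eq, hP.normal_eq, Prod.smul_mk,
    Prod.fst_sub, Prod.snd_sub, smul_eq_mul]
  linear_combination (-sr') * Real.sin_sq_add_cos_sq (θr (sr x))

theorem hasDerivWithinAt_dot_normal (hP : IsFrenetFrame θr κr e1 e2 p)
    (hq : HasDerivWithinAt q q' s x) (hsr : HasDerivWithinAt sr sr' s x) :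
    HasDerivWithinAt (fun u => dot (q u - p (sr u)) (e2 (sr u)))
      (dot q' (e2 (sr x)) - sr' * κr (sr x) * dot (q x - p (sr x)) (e1 (sr x))) s x := by
  have hE := (hP.hasDerivAt_normal (sr x)).scomp_hasDerivWithinAt x hsr
  have hD := (hP.hasDerivAt_path (sr x)).scomp_hasDerivWithinAt x hsr
  refine ((hq.sub hD).dot hE).congr_deriv ?_
  simp only [dot, Function.comp_apply, Pi.sub_apply, hP.tangent_eq, hP.normal_eq, Prod.smul_mk,
    Prod.fst_sub, Prod.snd_sub, smul_eq_mul]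
  ring

theorem hasDerivWithinAt_param_of_dot_tangent_eq_zero (hP : IsFrenetFrame θr κr e1 e2 p)
    {v a : ℝ} (hq : HasDerivWithinAt q (v • (Real.cos a, Real.sin a)) s x)
    (hsr : HasDerivWithinAt sr sr' s x) (horth : ∀ u ∈ s, dot (q u - p (sr u)) (e1 (sr u)) = 0)
    (hx : x ∈ s) (hreg : 1 - κr (sr x) * dot (q x - p (sr x)) (e2 (sr x)) ≠ 0) :
    HasDerivWithinAt sr
      (v * Real.cos (a - θr (sr x)) / (1 - κr (sr x) * dot (q x - p (sr x)) (e2 (sr x)))) s x := by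
  refine hasDerivWithinAt_of_uniqueDiffWithinAt_imp fun hu => ?_
  have hzero : HasDerivWithinAt (fun u => dot (q u - p (sr u)) (e1 (sr u))) 0 s x :=
    (hasDerivWithinAt_const x s 0).congr horth (horth x hx)
  have h := hu.eq_deriv _ (hP.hasDerivWithinAt_dot_tangent hq hsr) hzero
  rw [hP.dot_velocity_tangent] at h
  refine hsr.congr_deriv ?_
  rw [eq_div_iff hreg]
  linarith

theorem hasDerivWithinAt_sq_error (hP : IsFrenetFrame θr κr e1 e2 p) {v a : ℝ} {z : ℝ → ℝ}
    (hq : HasDerivWithinAt q (v • (Real.cos a, Real.sin a)) s x)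
    (hsr : HasDerivWithinAt sr sr' s x)
    (hz : HasDerivWithinAt z (v * Real.sin (a - θr (sr x))) s x)
    (hsr' : sr' * (1 - κr (sr x) * z x) = v * Real.cos (a - θr (sr x))) :
    HasDerivWithinAt (fun u => dot (q u - p (sr u)) (e1 (sr u)) ^ 2 +
      (dot (q u - p (sr u)) (e2 (sr u)) - z u) ^ 2) 0 s x := by
  have hT := hP.hasDerivWithinAt_dot_tangent hq hsr
  have hN := (hP.hasDerivWithinAt_dot_normal hq hsr).sub hz
  rw [hP.dot_velocity_tangent] at hT
  rw [hP.dot_velocity_normal] at hN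
  refine ((hT.pow 2).add (hN.pow 2)).congr_deriv ?_
  simp only [Pi.sub_apply]
  linear_combination (-2 * dot (q x - p (sr x)) (e1 (sr x))) * hsr'

theorem dot_eq_of_errorState (hP : IsFrenetFrame θr κr e1 e2 p) (hs : Convex ℝ s) {t0 : ℝ}
    (ht0 : t0 ∈ s) {θo v κ θ z : ℝ → ℝ}
    (hθo : ∀ t ∈ s, HasDerivWithinAt θo (κ t * v t) s t)
    (hq : ∀ t ∈ s, HasDerivWithinAt q (v t • (Real.cos (θo t), Real.sin (θo t))) s t)
    (hsr : ∀ t ∈ s, HasDerivWithinAt sr (v t * Real.cos (θ t) / (1 - κr (sr t) * z t)) s t)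
    (hz : ∀ t ∈ s, HasDerivWithinAt z (v t * Real.sin (θ t)) s t)
    (hθ : ∀ t ∈ s, HasDerivWithinAt θ
      (κ t * v t - κr (sr t) * v t * Real.cos (θ t) / (1 - κr (sr t) * z t)) s t)
    (hreg : ∀ t ∈ s, 1 - κr (sr t) * z t ≠ 0)
    (horth0 : dot (q t0 - p (sr t0)) (e1 (sr t0)) = 0)
    (hz0 : z t0 = dot (q t0 - p (sr t0)) (e2 (sr t0))) (hθ0 : θ t0 = θo t0 - θr (sr t0))
    {t : ℝ} (ht : t ∈ s) :
    dot (q t - p (sr t)) (e1 (sr t)) = 0 ∧ dot (q t - p (sr t)) (e2 (sr t)) = z t := by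
  have hθ_eq : EqOn θ (fun u => θo u - θr (sr u)) s := by
    refine hs.eqOn_of_hasDerivWithinAt_eq hθ (fun u hu => ?_) ht0 hθ0
    have hθr_sr := (hP.hasDerivAt_angle _).comp_hasDerivWithinAt u (hsr u hu)
    exact ((hθo u hu).sub hθr_sr).congr_deriv (by ring)
  have hW := hs.eqOn_of_hasDerivWithinAt_eq (g := fun _ => (0 : ℝ))
    (fun u hu => hP.hasDerivWithinAt_sq_error (hq u hu) (hsr u hu) (hθ_eq hu ▸ hz u hu)
      (by rw [div_mul_cancel₀ _ (hreg u hu), hθ_eq hu]))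
    (fun u _ => hasDerivWithinAt_const u s 0) ht0 (by simp [horth0, hz0]) ht
  simp only at hW
  rwa [add_eq_zero_iff_of_nonneg (sq_nonneg _) (sq_nonneg _), sq_eq_zero_iff, sq_eq_zero_iff,
    sub_eq_zero] at hW

end IsFrenetFrame

theorem reference_point_existence_iff_general
    (θr : ℝ → ℝ) (hθr : ContDiff ℝ 1 θr)
    (κr : ℝ → ℝ) (hκr : ∀ s, κr s = deriv θr s)
    (e1 e2 : ℝ → ℝ × ℝ)
    (he1 : ∀ s, e1 s = (Real.cos (θr s), Real.sin (θr s)))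
    (he2 : ∀ s, e2 s = (-Real.sin (θr s), Real.cos (θr s)))
    (p : ℝ → ℝ × ℝ) (hp : ∀ s, HasDerivAt p (e1 s) s)
    (t0 t1 : ℝ) (ht01 : t0 ≤ t1)
    (q : ℝ → ℝ × ℝ) (v κ θo : ℝ → ℝ)
    (hθo : ∀ t ∈ Set.Icc t0 t1, HasDerivWithinAt θo (κ t * v t) (Set.Icc t0 t1) t)
    (hq : ∀ t ∈ Set.Icc t0 t1,
      HasDerivWithinAt q (v t • (Real.cos (θo t), Real.sin (θo t))) (Set.Icc t0 t1) t)
    (sr0 : ℝ) :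
    (∃ sr sr' : ℝ → ℝ,
      (∀ t ∈ Set.Icc t0 t1, HasDerivWithinAt sr (sr' t) (Set.Icc t0 t1) t) ∧
      sr t0 = sr0 ∧
      (∀ t ∈ Set.Icc t0 t1,
        dot (q t - p (sr t)) (e1 (sr t)) = 0 ∧
        1 - κr (sr t) * dot (q t - p (sr t)) (e2 (sr t)) > 0))
    ↔
    (dot (q t0 - p sr0) (e1 sr0) = 0 ∧
     1 - κr sr0 * dot (q t0 - p sr0) (e2 sr0) > 0 ∧
     ∃ θ sr z : ℝ → ℝ,
       sr t0 = sr0 ∧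
       z t0 = dot (q t0 - p sr0) (e2 sr0) ∧
       θ t0 = θo t0 - θr sr0 ∧
       (∀ t ∈ Set.Icc t0 t1,
         HasDerivWithinAt sr (v t * Real.cos (θ t) / (1 - κr (sr t) * z t))
           (Set.Icc t0 t1) t ∧
         HasDerivWithinAt z (v t * Real.sin (θ t)) (Set.Icc t0 t1) t ∧
         HasDerivWithinAt θ
           (κ t * v t - κr (sr t) * v t * Real.cos (θ t) / (1 - κr (sr t) * z t))
           (Set.Icc t0 t1) t ∧
         1 - κr (sr t) * z t > 0)) := by
  have hP : IsFrenetFrame θr κr e1 e2 p :=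
    ⟨fun s => hκr s ▸ (hθr.differentiable one_ne_zero s).hasDerivAt, he1, he2, hp⟩
  have ht0 : t0 ∈ Icc t0 t1 := left_mem_Icc.2 ht01
  constructor
  · rintro ⟨sr, sr', hsr, rfl, hA⟩
    refine ⟨(hA t0 ht0).1, (hA t0 ht0).2, fun t => θo t - θr (sr t), sr,
      fun t => dot (q t - p (sr t)) (e2 (sr t)), rfl, rfl, rfl, fun t ht => ?_⟩
    have hsr_eq := hP.hasDerivWithinAt_param_of_dot_tangent_eq_zero (hq t ht) (hsr t ht)
      (fun u hu => (hA u hu).1) ht (hA t ht).2.ne'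
    refine ⟨hsr_eq, ?_, ?_, (hA t ht).2⟩
    · exact (hP.hasDerivWithinAt_dot_normal (hq t ht) (hsr t ht)).congr_deriv
        (by rw [(hA t ht).1, hP.dot_velocity_normal]; ring)
    · exact ((hθo t ht).sub ((hP.hasDerivAt_angle _).comp_hasDerivWithinAt t hsr_eq)).congr_deriv
        (by ring)
  · rintro ⟨horth0, -, θ, sr, z, rfl, hz0, hθ0, hODE⟩
    have hcoords (t : ℝ) (ht : t ∈ Icc t0 t1) := hP.dot_eq_of_errorState (convex_Icc t0 t1) ht0 hθo
      hq (fun t ht => (hODE t ht).1) (fun t ht => (hODE t ht).2.1) (fun t ht => (hODE t ht).2.2.1)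
      (fun t ht => (hODE t ht).2.2.2.ne') horth0 hz0 hθ0 ht
    exact ⟨sr, _, fun t ht => (hODE t ht).1, rfl,
      fun t ht => ⟨(hcoords t ht).1, (hcoords t ht).2 ▸ (hODE t ht).2.2.2⟩⟩

/-- Theorem 1, equivalence: the existence of a differentiable
reference-point parameter `s_r` satisfying the orthogonality condition (A1)
and the regularity condition (A2) on `[t₀,t₁]` with `s_r(t₀) = s_{r0}` is
equivalent to: the initial conditions (B1), (B2) hold and the error state
equation admits a differentiable solution `(θ, s_r, z)` on `[t₀,t₁]` along
which `1 − κ_r(s_r) z > 0`. -/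
theorem reference_point_existence_iff
    (θr : ℝ → ℝ) (hθr : ContDiff ℝ 1 θr)
    (κr : ℝ → ℝ) (hκr : ∀ s, κr s = deriv θr s) (hκrLip : LocallyLipschitz κr)
    (e1 e2 : ℝ → ℝ × ℝ)
    (he1 : ∀ s, e1 s = (Real.cos (θr s), Real.sin (θr s)))
    (he2 : ∀ s, e2 s = (-Real.sin (θr s), Real.cos (θr s)))
    (p : ℝ → ℝ × ℝ) (hp : ∀ s, HasDerivAt p (e1 s) s)
    (t0 t1 : ℝ) (ht01 : t0 ≤ t1)
    (q : ℝ → ℝ × ℝ) (v κ θo : ℝ → ℝ)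
    (hv : ContinuousOn v (Set.Icc t0 t1)) (hκcont : ContinuousOn κ (Set.Icc t0 t1))
    (hθo : ∀ t ∈ Set.Icc t0 t1, HasDerivWithinAt θo (κ t * v t) (Set.Icc t0 t1) t)
    (hq : ∀ t ∈ Set.Icc t0 t1,
      HasDerivWithinAt q (v t • (Real.cos (θo t), Real.sin (θo t))) (Set.Icc t0 t1) t)
    (sr0 : ℝ) :
    (∃ sr sr' : ℝ → ℝ,
      (∀ t ∈ Set.Icc t0 t1, HasDerivWithinAt sr (sr' t) (Set.Icc t0 t1) t) ∧
      sr t0 = sr0 ∧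
      (∀ t ∈ Set.Icc t0 t1,
        dot (q t - p (sr t)) (e1 (sr t)) = 0 ∧
        1 - κr (sr t) * dot (q t - p (sr t)) (e2 (sr t)) > 0))
    ↔
    (dot (q t0 - p sr0) (e1 sr0) = 0 ∧
     1 - κr sr0 * dot (q t0 - p sr0) (e2 sr0) > 0 ∧
     ∃ θ sr z : ℝ → ℝ,
       sr t0 = sr0 ∧
       z t0 = dot (q t0 - p sr0) (e2 sr0) ∧
       θ t0 = θo t0 - θr sr0 ∧
       (∀ t ∈ Set.Icc t0 t1,
         HasDerivWithinAt sr (v t * Real.cos (θ t) / (1 - κr (sr t) * z t))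
           (Set.Icc t0 t1) t ∧
         HasDerivWithinAt z (v t * Real.sin (θ t)) (Set.Icc t0 t1) t ∧
         HasDerivWithinAt θ
           (κ t * v t - κr (sr t) * v t * Real.cos (θ t) / (1 - κr (sr t) * z t))
           (Set.Icc t0 t1) t ∧
         1 - κr (sr t) * z t > 0)) :=
  reference_point_existence_iff_general θr hθr κr hκr e1 e2 he1 he2 p hp t0 t1 ht01 q v κ θo hθo hq
    sr0
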